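/- arXiv:2401.00266 — 2 statements merged into one kernel-verified Lean document; each statement's English description precedes it below -/
import Mathlib

section
/- If κ is a weakly Mahlo cardinal, X ⊇ κ a set of ordinals, and A ⊆ P_κ X is ≺-cofinal in P_κ X, then d_0(A) = {x ∈ P_κ X : A is ≺-cofinal in P_{κ_x} x} is a weak club in P_κ X, i.e., d_0(A) is ≺-cofinal in P_κ X and whenever d_0(A) is ≺-cofinal in P_{κ_x} x then x ∈ d_0(A). -/
namespace TwoCard


open Cardinal Set

/-- The set `x ∩ κ`: the elements of `x` that are ordinals less than `κ`. -/
def interK (κ : Cardinal.{1}) (x : Set Ordinal.{0}) : Set Ordinal.{0} :=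
  {o | o ∈ x ∧ Ordinal.lift.{1} o < κ.ord}

/-- `κ_x = |x ∩ κ|`. -/
noncomputable def kap (κ : Cardinal.{1}) (x : Set Ordinal.{0}) : Cardinal.{1} :=
  #(interK κ x)

/-- `P_κ X`, the collection of subsets of `X` of cardinality less than `κ`. -/
def P (κ : Cardinal.{1}) (X : Set Ordinal.{0}) : Set (Set Ordinal.{0}) :=
  {x | x ⊆ X ∧ #x < κ}

/-- The strong subset relation: `x ≺ y` iff `x ⊆ y` and `|x| < |y ∩ κ|`. -/
def prec (κ : Cardinal.{1}) (x y : Set Ordinal.{0}) : Prop :=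
  x ⊆ y ∧ #x < kap κ y

/-- `A` is `≺`-cofinal in `P_{κ_x} x`. -/
def CofinalBelow (κ : Cardinal.{1}) (A : Set (Set Ordinal.{0})) (x : Set Ordinal.{0}) : Prop :=
  ∀ y, prec κ y x → ∃ z ∈ A, prec κ y z ∧ prec κ z x

/-- `A` is `≺`-cofinal in `P_κ X`. -/
def PrecCofinal (κ : Cardinal.{1}) (X : Set Ordinal.{0}) (A : Set (Set Ordinal.{0})) : Prop :=
  ∀ x ∈ P κ X, ∃ y ∈ A, prec κ x y

/-- `κ ⊆ X`, i.e. every ordinal below `κ` belongs to `X`. -/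
def KappaSub (κ : Cardinal.{1}) (X : Set Ordinal.{0}) : Prop :=
  ∀ o : Ordinal.{0}, Ordinal.lift.{1} o < κ.ord → o ∈ X

/-- `κ` is weakly inaccessible: an uncountable regular limit cardinal. -/
def WeaklyInaccessible (κ : Cardinal.{u}) : Prop :=
  ℵ₀ < κ ∧ κ.IsRegular ∧ Order.IsSuccLimit κ

def UnbddBelow (C : Set Ordinal.{u}) (lam : Ordinal.{u}) : Prop :=
  ∀ a < lam, ∃ b ∈ C, a < b ∧ b < lam

def ClosedBelow (C : Set Ordinal.{u}) (lam : Ordinal.{u}) : Prop :=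
  ∀ a < lam, a ≠ 0 → (∀ b < a, ∃ c ∈ C, b < c ∧ c < a) → a ∈ C

/-- `C` is club in the ordinal `lam`. -/
def ClubBelow (C : Set Ordinal.{u}) (lam : Ordinal.{u}) : Prop :=
  UnbddBelow C lam ∧ ClosedBelow C lam

/-- `S` is stationary in the ordinal `lam`. -/
def StatBelow (S : Set Ordinal.{u}) (lam : Ordinal.{u}) : Prop :=
  ∀ C, ClubBelow C lam → ∃ a ∈ S ∩ C, a < lam

/-- The class of ordinals that are regular cardinals. -/
def RegOrds : Set Ordinal.{u} :=
  {o | o.card.ord = o ∧ o.card.IsRegular}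

/-- `c` is weakly Mahlo: regular, uncountable, with stationarily many regular cardinals below. -/
def WeaklyMahlo (c : Cardinal.{u}) : Prop :=
  c.IsRegular ∧ ℵ₀ < c ∧ StatBelow RegOrds c.ord

/-- `c` is Mahlo: (strongly) inaccessible with stationarily many regular cardinals below. -/
def Mahlo (c : Cardinal.{u}) : Prop :=
  c.IsInaccessible ∧ StatBelow RegOrds c.ord


/-! ### Auxiliary machinery for `d0_weakClub` -/

/-- The set of level-0 ordinals `γ` with `lift γ ≤ α`. -/
def ost (α : Ordinal.{1}) : Set Ordinal.{0} := {γ | Ordinal.lift.{1} γ ≤ α}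

theorem mem_ost {α : Ordinal.{1}} {γ : Ordinal.{0}} (h : Ordinal.lift.{1} γ ≤ α) :
    γ ∈ ost α := h

theorem ost_le {α : Ordinal.{1}} {γ : Ordinal.{0}} (h : γ ∈ ost α) :
    Ordinal.lift.{1} γ ≤ α := h

/-- The transfinite chain used in the proof of `d0_weakClub`: start at `x`, at successors
pick (if possible) an element of `A` strongly above the previous set together with all
ordinals below the stage, and take unions at limits. -/
noncomputable def ch (A : Set (Set Ordinal.{0})) (κ : Cardinal.{1}) (x : Set Ordinal.{0})
    (α : Ordinal.{1}) : Set Ordinal.{0} :=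
  @Ordinal.limitRecOn (fun _ => Set Ordinal.{0}) α x
    (fun β ih => @dite _ (∃ z ∈ A, prec κ (ih ∪ ost β) z) (Classical.propDecidable _)
      (fun h => h.choose) (fun _ => ih ∪ ost β))
    (fun β _ ih => ⋃ i : β.ToType, ih ((@Ordinal.ToType.mk β).symm i).1
      ((@Ordinal.ToType.mk β).symm i).2)

theorem ch_zero (A κ x) : ch A κ x 0 = x := by
  unfold ch; exact Ordinal.limitRecOn_zero _ _ _

theorem ch_succ_of_ex {A κ x β} (h : ∃ z ∈ A, prec κ (ch A κ x β ∪ ost β) z) :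
    ch A κ x (Order.succ β) = h.choose := by
  unfold ch
  rw [Ordinal.limitRecOn_succ]
  exact dif_pos h

theorem ch_succ_sub (A κ x β) : ch A κ x β ∪ ost β ⊆ ch A κ x (Order.succ β) := by
  conv_rhs => unfold ch
  rw [Ordinal.limitRecOn_succ]
  split_ifs with h
  · exact h.choose_spec.2.1
  · exact fun o ho => ho

theorem ch_limit (A κ x) {β} (h : Order.IsSuccLimit β) :
    ch A κ x β = ⋃ i : β.ToType, ch A κ x ((@Ordinal.ToType.mk β).symm i).1 := by
  unfold ch; exact Ordinal.limitRecOn_limit _ _ _ _ h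

theorem mem_ch_limit {A κ x β} (h : Order.IsSuccLimit β) {o : Ordinal.{0}} :
    o ∈ ch A κ x β ↔ ∃ γ, γ < β ∧ o ∈ ch A κ x γ := by
  rw [ch_limit A κ x h]
  simp only [Set.mem_iUnion]
  constructor
  · rintro ⟨i, hi⟩
    exact ⟨_, ((@Ordinal.ToType.mk β).symm i).2, hi⟩
  · rintro ⟨γ, hγ, ho⟩
    refine ⟨(@Ordinal.ToType.mk β) ⟨γ, hγ⟩, ?_⟩
    simpa using ho

theorem ch_mono (A κ x) (α : Ordinal.{1}) : ∀ β ≤ α, ch A κ x β ⊆ ch A κ x α := by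
  induction α using Ordinal.limitRecOn with
  | zero =>
    intro β hβ
    rw [nonpos_iff_eq_zero.1 hβ]
  | add_one α ih =>
    rw [Ordinal.add_one_eq_succ]
    intro β hβ
    rcases hβ.lt_or_eq with h | rfl
    · exact ((ih β (Order.lt_succ_iff.1 h)).trans
        ((Set.subset_union_left).trans (ch_succ_sub A κ x α)))
    · exact subset_rfl
  | limit α hα ih =>
    intro β hβ
    rcases hβ.lt_or_eq with h | rfl
    · exact fun o ho => (mem_ch_limit hα).2 ⟨β, h, ho⟩
    · exact subset_rfl

/-- Every ordinal strictly below `Ordinal.univ.{0,1}` is a lift. -/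
theorem exists_lift_of_lt_univ {ρ : Ordinal.{1}} (h : ρ < Ordinal.univ.{0,1}) :
    ∃ ρ₀ : Ordinal.{0}, Ordinal.lift.{1} ρ₀ = ρ := by
  have := Ordinal.liftPrincipalSeg.{0,1}.mem_range_of_rel_top (by simpa using h)
  simpa using this

theorem mk_setOf_lift_lt {ρ : Ordinal.{1}} (h : ρ < Ordinal.univ.{0,1}) :
    #{γ : Ordinal.{0} | Ordinal.lift.{1} γ < ρ} = ρ.card := by
  obtain ⟨ρ₀, rfl⟩ := exists_lift_of_lt_univ h
  have he : {γ : Ordinal.{0} | Ordinal.lift.{1} γ < Ordinal.lift.{1} ρ₀} = Set.Iio ρ₀ := by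
    ext γ; simp [Ordinal.lift_lt]
  rw [he, Ordinal.mk_Iio_ordinal, Ordinal.lift_card]

theorem mk_ost {α : Ordinal.{1}} (h : Order.succ α < Ordinal.univ.{0,1}) :
    #(ost α) = (Order.succ α).card := by
  have he : ost α = {γ : Ordinal.{0} | Ordinal.lift.{1} γ < Order.succ α} := by
    ext γ; simp [ost, Order.lt_succ_iff]
  rw [he, mk_setOf_lift_lt h]

/-- Bounding function used for the club argument. -/
noncomputable def Fb (A : Set (Set Ordinal.{0})) (κ : Cardinal.{1}) (x : Set Ordinal.{0})
    (α : Ordinal.{1}) : Ordinal.{1} :=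
  Order.succ (max (⨆ γ : interK κ (ch A κ x α), Ordinal.lift.{1} γ.1) (#(ch A κ x α)).ord)

theorem Fb_lt (A κ x α) : ∀ o ∈ interK κ (ch A κ x α), Ordinal.lift.{1} o < Fb A κ x α := by
  intro o ho
  exact lt_of_le_of_lt ((Ordinal.le_iSup (fun γ : interK κ (ch A κ x α) => Ordinal.lift.{1} γ.1)
    ⟨o, ho⟩).trans (le_max_left _ _)) (Order.lt_succ _)

theorem Fb_card (A κ x α) : (#(ch A κ x α)).ord < Fb A κ x α :=
  (le_max_right _ _).trans_lt (Order.lt_succ _)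

theorem Fb_lt_ord {A κ x α} (hreg : κ.IsRegular) (hch : #(ch A κ x α) < κ) :
    Fb A κ x α < κ.ord := by
  refine (Cardinal.isSuccLimit_ord hreg.1).succ_lt (max_lt ?_ (Cardinal.ord_lt_ord.2 hch))
  refine Ordinal.iSup_lt_ord ?_ (fun γ => γ.2.2)
  rw [hreg.cof_eq]
  exact lt_of_le_of_lt (Cardinal.mk_le_mk_of_subset (fun o ho => ho.1)) hch

/-- Step function for constructing closure points. -/
noncomputable def gb (A : Set (Set Ordinal.{0})) (κ : Cardinal.{1}) (x : Set Ordinal.{0})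
    (b : Ordinal.{1}) : Ordinal.{1} :=
  Order.succ (max (max b (⨆ i : (Order.succ b).ToType,
    Fb A κ x ((@Ordinal.ToType.mk (Order.succ b)).symm i).1)) (Order.succ b.card).ord)

theorem gb_lt_self (A κ x b) : b < gb A κ x b :=
  ((le_max_left _ _).trans (le_max_left _ _)).trans_lt (Order.lt_succ _)

theorem gb_F_lt (A κ x b) : ∀ α ≤ b, Fb A κ x α < gb A κ x b := by
  intro α hαb
  have h1 : Fb A κ x α ≤ ⨆ i : (Order.succ b).ToType,
      Fb A κ x ((@Ordinal.ToType.mk (Order.succ b)).symm i).1 := by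
    have := Ordinal.le_iSup (fun i : (Order.succ b).ToType =>
      Fb A κ x ((@Ordinal.ToType.mk (Order.succ b)).symm i).1)
      ((@Ordinal.ToType.mk (Order.succ b)) ⟨α, Order.lt_succ_iff.2 hαb⟩)
    simpa using this
  exact (h1.trans ((le_max_right _ _).trans (le_max_left _ _))).trans_lt (Order.lt_succ _)

theorem gb_succ_card (A κ x b) : (Order.succ b.card).ord ≤ gb A κ x b :=
  (le_max_right _ _).trans (Order.le_succ _)

theorem gb_lt_ord {A κ x b} (hreg : κ.IsRegular) (hb : b < κ.ord)
    (hsl : Order.succ b.card < κ)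
    (hch : ∀ β : Ordinal.{1}, β < κ.ord → #(ch A κ x β) < κ) : gb A κ x b < κ.ord := by
  have hord := Cardinal.isSuccLimit_ord hreg.1
  refine hord.succ_lt (max_lt (max_lt hb ?_) (Cardinal.ord_lt_ord.2 hsl))
  refine Ordinal.iSup_lt_ord ?_ ?_
  · rw [Cardinal.mk_toType, hreg.cof_eq]
    exact Cardinal.lt_ord.1 (hord.succ_lt hb)
  · exact fun i => Fb_lt_ord hreg
      (hch _ ((((@Ordinal.ToType.mk (Order.succ b)).symm i).2 : _ < Order.succ b).trans
        (hord.succ_lt hb)))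

/-- Iterates of the step function. -/
noncomputable def sb (A : Set (Set Ordinal.{0})) (κ : Cardinal.{1}) (x : Set Ordinal.{0})
    (a : Ordinal.{1}) : ℕ → Ordinal.{1} :=
  fun n => Nat.recAux (Order.succ (max a (max (#x).ord (ℵ₀ : Cardinal.{1}).ord)))
    (fun _ b => gb A κ x b) n

theorem sb_zero (A κ x a) :
    sb A κ x a 0 = Order.succ (max a (max (#x).ord (ℵ₀ : Cardinal.{1}).ord)) := rfl

theorem sb_succ (A κ x a n) : sb A κ x a (n + 1) = gb A κ x (sb A κ x a n) := rfl

/-- The club of suitable closure points. -/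
noncomputable def Cb (A : Set (Set Ordinal.{0})) (κ : Cardinal.{1}) (x : Set Ordinal.{0}) :
    Set Ordinal.{1} :=
  {δ | (∀ α < δ, Fb A κ x α < δ) ∧ δ.card.ord = δ ∧
    (∀ μ : Cardinal.{1}, μ < δ.card → Order.succ μ < δ.card) ∧ (#x).ord < δ ∧ ℵ₀ < δ.card}

theorem Cb_mem {A κ x δ} : δ ∈ Cb A κ x ↔ ((∀ α < δ, Fb A κ x α < δ) ∧ δ.card.ord = δ ∧
    (∀ μ : Cardinal.{1}, μ < δ.card → Order.succ μ < δ.card) ∧ (#x).ord < δ ∧ ℵ₀ < δ.card) :=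
  Iff.rfl

/-- If `κ` is weakly Mahlo and `A ⊆ P_κ X` is `≺`-cofinal in `P_κ X`,
then `d₀(A) = {x ∈ P_κ X : A is ≺-cofinal in P_{κ_x} x}` is a weak club in `P_κ X`. -/
theorem d0_weakClub (κ : Cardinal.{1}) (X : Set Ordinal.{0})
    (hκ : WeaklyMahlo κ) (hX : KappaSub κ X)
    (A : Set (Set Ordinal.{0})) (hA : A ⊆ P κ X) (hcof : PrecCofinal κ X A) :
    PrecCofinal κ X {x | x ∈ P κ X ∧ CofinalBelow κ A x} ∧
    ∀ x ∈ P κ X, CofinalBelow κ {x | x ∈ P κ X ∧ CofinalBelow κ A x} x →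
      x ∈ {x | x ∈ P κ X ∧ CofinalBelow κ A x} := by
  obtain ⟨hreg, hℵ, hstat⟩ := hκ
  have hκℵ : ℵ₀ ≤ κ := hreg.1
  have hord : Order.IsSuccLimit κ.ord := Cardinal.isSuccLimit_ord hκℵ
  constructor
  · -- `d₀(A)` is `≺`-cofinal
    intro x hx
    by_cases hUc : Ordinal.univ.{0,1} < κ.ord
    · -- degenerate case: `κ` is too big; `hcof` is contradictory
      exfalso
      have hlift : ∀ o : Ordinal.{0}, Ordinal.lift.{1} o < Ordinal.univ.{0,1} := fun o => by
        simpa using Ordinal.liftPrincipalSeg.{0,1}.lt_top o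
      have hXall : X = Set.univ := Set.eq_univ_of_forall fun o => hX o ((hlift o).trans hUc)
      have hXuniv : #X = Cardinal.univ.{0,1} := by
        rw [hXall, Cardinal.mk_univ, ← Cardinal.univ_id]
      have hXκ : #X < κ := by
        rw [hXuniv, ← Cardinal.ord_lt_ord, Cardinal.ord_univ]; exact hUc
      obtain ⟨y, _, _, hlt⟩ := hcof X ⟨subset_rfl, hXκ⟩
      have hle : kap κ y ≤ #X := by
        rw [hXuniv]
        calc kap κ y ≤ #(Set.univ : Set Ordinal.{0}) :=
              Cardinal.mk_le_mk_of_subset (Set.subset_univ _)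
          _ = Cardinal.univ.{0,1} := by rw [Cardinal.mk_univ, ← Cardinal.univ_id]
      exact absurd hlt (not_lt.2 hle)
    push_neg at hUc
    -- successor cardinals below κ stay below κ
    have hsucclt : ∀ μ : Cardinal.{1}, μ < κ → Order.succ μ < κ := by
      intro μ hμ
      have hclub : ClubBelow {e : Ordinal.{1} | μ.ord < e} κ.ord := by
        constructor
        · intro a ha
          refine ⟨Order.succ (max a μ.ord), ?_, ?_, ?_⟩
          · exact (le_max_right a μ.ord).trans_lt (Order.lt_succ _)
          · exact (le_max_left a μ.ord).trans_lt (Order.lt_succ _)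
          · exact hord.succ_lt (max_lt ha (Cardinal.ord_lt_ord.2 hμ))
        · intro a _ h0 hcf
          obtain ⟨c, hc, _, hca⟩ := hcf 0 (pos_iff_ne_zero.2 h0)
          exact hc.trans hca
      obtain ⟨e, ⟨⟨hecard, _⟩, heμ⟩, heκ⟩ := hstat _ hclub
      have h1 : μ < e.card := Cardinal.ord_lt_ord.1 (by rw [hecard]; exact heμ)
      exact (Order.succ_le_of_lt h1).trans_lt (Cardinal.lt_ord.1 heκ)
    -- the chain invariant
    have hinv : ∀ α : Ordinal.{1}, α < κ.ord → ch A κ x α ⊆ X ∧ #(ch A κ x α) < κ := by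
      intro α
      induction α using Ordinal.limitRecOn with
      | zero => intro _; rw [ch_zero]; exact hx
      | add_one α ih =>
        rw [Ordinal.add_one_eq_succ]
        intro hα
        have hα' : α < κ.ord := (Order.lt_succ α).trans hα
        obtain ⟨h1, h2⟩ := ih hα'
        have hostX : ost α ⊆ X := fun γ hγ => hX γ (lt_of_le_of_lt hγ hα')
        have hostκ : #(ost α) < κ := by
          rw [mk_ost (hα.trans_le hUc)]
          exact Cardinal.lt_ord.1 hα
        have hex : ∃ z ∈ A, prec κ (ch A κ x α ∪ ost α) z :=
          hcof _ ⟨Set.union_subset h1 hostX,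
            lt_of_le_of_lt (Cardinal.mk_union_le _ _) (Cardinal.add_lt_of_lt hκℵ h2 hostκ)⟩
        rw [ch_succ_of_ex hex]
        exact ⟨(hA hex.choose_spec.1).1, (hA hex.choose_spec.1).2⟩
      | limit α hlim ih =>
        intro hα
        rw [ch_limit A κ x hlim]
        constructor
        · exact Set.iUnion_subset fun i =>
            (ih _ ((@Ordinal.ToType.mk α).symm i).2
              ((((@Ordinal.ToType.mk α).symm i).2 : _ < α).trans hα)).1
        · refine lt_of_le_of_lt (Cardinal.mk_iUnion_le _) ?_
          refine Cardinal.mul_lt_of_lt hκℵ ?_ ?_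
          · rw [Cardinal.mk_toType]; exact Cardinal.lt_ord.1 hα
          · exact Cardinal.iSup_lt_of_isRegular hreg
              (by rw [Cardinal.mk_toType]; exact Cardinal.lt_ord.1 hα)
              (fun i => (ih _ ((@Ordinal.ToType.mk α).symm i).2
                ((((@Ordinal.ToType.mk α).symm i).2 : _ < α).trans hα)).2)
    -- successor steps land in `A`
    have hsucc : ∀ α : Ordinal.{1}, α < κ.ord →
        ch A κ x (Order.succ α) ∈ A ∧
          prec κ (ch A κ x α ∪ ost α) (ch A κ x (Order.succ α)) := by
      intro α hα
      obtain ⟨h1, h2⟩ := hinv α hα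
      have hα2 : Order.succ α < κ.ord := hord.succ_lt hα
      have hostX : ost α ⊆ X := fun γ hγ => hX γ (lt_of_le_of_lt hγ hα)
      have hostκ : #(ost α) < κ := by
        rw [mk_ost (hα2.trans_le hUc)]
        exact Cardinal.lt_ord.1 hα2
      have hex : ∃ z ∈ A, prec κ (ch A κ x α ∪ ost α) z :=
        hcof _ ⟨Set.union_subset h1 hostX,
          lt_of_le_of_lt (Cardinal.mk_union_le _ _) (Cardinal.add_lt_of_lt hκℵ h2 hostκ)⟩
      rw [ch_succ_of_ex hex]
      exact hex.choose_spec
    -- `Cb` is unbounded below `κ.ord`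
    have hCunb : UnbddBelow (Cb A κ x) κ.ord := by
      intro a ha
      have hsκ : ∀ n, sb A κ x a n < κ.ord := by
        intro n; induction n with
        | zero =>
          rw [sb_zero]
          exact hord.succ_lt (max_lt ha
            (max_lt (Cardinal.ord_lt_ord.2 hx.2) (Cardinal.ord_lt_ord.2 hℵ)))
        | succ n ih =>
          rw [sb_succ]
          exact gb_lt_ord hreg ih (hsucclt _ (Cardinal.lt_ord.1 ih))
            (fun β hβ => (hinv β hβ).2)
      have hsmono : ∀ n, sb A κ x a n < sb A κ x a (n + 1) := by
        intro n; rw [sb_succ]; exact gb_lt_self _ _ _ _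
      set δu : Ordinal.{1} := ⨆ n, sb A κ x a n with hδu
      have hsle : ∀ n, sb A κ x a n ≤ δu := fun n => by
        rw [hδu]; exact Ordinal.le_iSup (fun n => sb A κ x a n) n
      have hslt : ∀ n, sb A κ x a n < δu := fun n => (hsmono n).trans_le (hsle (n + 1))
      have hltδu : ∀ {β : Ordinal.{1}}, β < δu → ∃ n, β < sb A κ x a n := by
        intro β hβ
        rw [hδu] at hβ
        exact Ordinal.lt_iSup_iff.1 hβ
      have hδuκ : δu < κ.ord := by
        rw [hδu]
        refine Ordinal.iSup_lt_ord_lift ?_ hsκ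
        rw [hreg.cof_eq]
        calc Cardinal.lift.{1,0} #ℕ = ℵ₀ := by simp
          _ < κ := hℵ
      have ha0 : a < δu := (((le_max_left _ _).trans_lt (Order.lt_succ _)).trans_eq
        (sb_zero A κ x a).symm).trans_le (hsle 0)
      have hδuord : δu.card.ord = δu := by
        refine le_antisymm (Cardinal.ord_card_le _) ?_
        by_contra hne
        obtain ⟨n, hn⟩ := hltδu (lt_of_not_ge hne)
        have e1 : δu.card ≤ (sb A κ x a n).card := by
          have := Ordinal.card_le_card hn.le
          rwa [Cardinal.card_ord] at this
        have e2 : Order.succ δu.card ≤ δu.card := by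
          calc Order.succ δu.card = ((Order.succ δu.card).ord).card := (Cardinal.card_ord _).symm
            _ ≤ (sb A κ x a (n + 1)).card := Ordinal.card_le_card
                ((Cardinal.ord_le_ord.2 (Order.succ_le_succ e1)).trans
                  (by rw [sb_succ]; exact gb_succ_card _ _ _ _))
            _ ≤ δu.card := Ordinal.card_le_card (hsle (n + 1))
        exact absurd e2 (not_le.2 (Order.lt_succ _))
      refine ⟨δu, ?_, ha0, hδuκ⟩
      rw [Cb_mem]
      refine ⟨?_, hδuord, ?_, ?_, ?_⟩
      · intro α hα
        obtain ⟨n, hn⟩ := hltδu hα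
        exact (gb_F_lt A κ x (sb A κ x a n) α hn.le).trans_le
          (by rw [← sb_succ]; exact hsle (n + 1))
      · intro μ hμ
        have h1 : μ.ord < δu := (Cardinal.ord_lt_ord.2 hμ).trans_le
          (le_of_eq_of_le hδuord le_rfl)
        obtain ⟨n, hn⟩ := hltδu h1
        have h2 : μ ≤ (sb A κ x a n).card := by
          have := Ordinal.card_le_card hn.le
          rwa [Cardinal.card_ord] at this
        have h3 : (Order.succ μ).ord < δu :=
          lt_of_le_of_lt ((Cardinal.ord_le_ord.2 (Order.succ_le_succ h2)).trans
            (by rw [sb_succ]; exact gb_succ_card _ _ _ _)) (hslt (n + 1))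
        exact Cardinal.ord_lt_ord.1 (by rw [hδuord]; exact h3)
      · exact ((((le_max_left _ _).trans (le_max_right a _)).trans_lt
          (Order.lt_succ _)).trans_eq (sb_zero A κ x a).symm).trans_le (hsle 0)
      · have h5 : (ℵ₀ : Cardinal.{1}).ord < δu :=
          ((((le_max_right _ _).trans (le_max_right a _)).trans_lt
            (Order.lt_succ _)).trans_eq (sb_zero A κ x a).symm).trans_le (hsle 0)
        exact Cardinal.ord_lt_ord.1 (by rw [hδuord]; exact h5)
    -- `Cb` is closed below `κ.ord`
    have hCcl : ClosedBelow (Cb A κ x) κ.ord := by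
      intro a _ h0 hcf
      obtain ⟨c0, hc0C, _, hc0a⟩ := hcf 0 (pos_iff_ne_zero.2 h0)
      rw [Cb_mem] at hc0C
      have hcard : a.card.ord = a := by
        refine le_antisymm (Cardinal.ord_card_le _) ?_
        by_contra hne
        obtain ⟨c, hcC, hbc, hca⟩ := hcf _ (lt_of_not_ge hne)
        rw [Cb_mem] at hcC
        have h1 : a.card < c.card := Cardinal.ord_lt_ord.1 (by rw [hcC.2.1]; exact hbc)
        exact absurd (Ordinal.card_le_card hca.le) (not_le.2 h1)
      rw [Cb_mem]
      refine ⟨?_, hcard, ?_, ?_, ?_⟩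
      · intro α hα
        obtain ⟨c, hcC, hαc, hca⟩ := hcf α hα
        rw [Cb_mem] at hcC
        exact (hcC.1 α hαc).trans hca
      · intro μ hμ
        have h1 : μ.ord < a := by rw [← hcard]; exact Cardinal.ord_lt_ord.2 hμ
        obtain ⟨c, hcC, hμc, hca⟩ := hcf _ h1
        rw [Cb_mem] at hcC
        have h2 : μ < c.card := Cardinal.ord_lt_ord.1 (by rw [hcC.2.1]; exact hμc)
        exact lt_of_lt_of_le (hcC.2.2.1 μ h2) (Ordinal.card_le_card hca.le)
      · exact hc0C.2.2.2.1.trans hc0a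
      · exact lt_of_lt_of_le hc0C.2.2.2.2 (Ordinal.card_le_card hc0a.le)
    -- apply stationarity
    obtain ⟨δ, ⟨⟨hδcard, hδreg⟩, hδC⟩, hδκ⟩ := hstat _ ⟨hCunb, hCcl⟩
    rw [Cb_mem] at hδC
    obtain ⟨hδF, hδord, hδsucc, hδx, hδℵ⟩ := hδC
    have hδlim : Order.IsSuccLimit δ := by
      rw [← hδcard]; exact Cardinal.isSuccLimit_ord hδℵ.le
    -- the witness
    have hinterK : interK κ (ch A κ x δ) = {γ : Ordinal.{0} | Ordinal.lift.{1} γ < δ} := by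
      ext γ
      constructor
      · rintro ⟨hγmem, hγκ⟩
        obtain ⟨β, hβδ, hγβ⟩ := (mem_ch_limit hδlim).1 hγmem
        exact (Fb_lt A κ x β γ ⟨hγβ, hγκ⟩).trans (hδF β hβδ)
      · intro hγδ
        have hm : γ ∈ ch A κ x (Order.succ (Ordinal.lift.{1} γ)) :=
          ch_succ_sub A κ x _ (Set.mem_union_right _
            (mem_ost (le_refl (Ordinal.lift.{1} γ))))
        exact ⟨ch_mono A κ x δ _ (hδlim.succ_lt hγδ).le hm, hγδ.trans hδκ⟩
    have hkap : kap κ (ch A κ x δ) = δ.card := by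
      rw [kap, hinterK, mk_setOf_lift_lt (hδκ.trans_le hUc)]
    have hδcof : δ.cof = δ.card := by
      conv_lhs => rw [← hδcard]
      exact hδreg.cof_eq
    refine ⟨ch A κ x δ, ⟨hinv δ hδκ, ?_⟩, ?_, ?_⟩
    · -- CofinalBelow κ A (ch A κ x δ)
      intro z hz
      obtain ⟨hzy, hzk⟩ := hz
      have hzc : #z < δ.card := by rw [← hkap]; exact hzk
      have hmem : ∀ o : z, ∃ β, β < δ ∧ (o : Ordinal.{0}) ∈ ch A κ x β :=
        fun o => (mem_ch_limit hδlim).1 (hzy o.2)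
      have hfδ : ∀ o : z, (hmem o).choose < δ := fun o => (hmem o).choose_spec.1
      have hfm : ∀ o : z, (o : Ordinal.{0}) ∈ ch A κ x ((hmem o).choose) :=
        fun o => (hmem o).choose_spec.2
      have hα₀δ : (⨆ o : z, (hmem o).choose) < δ :=
        Ordinal.iSup_lt_ord (by rw [hδcof]; exact hzc) hfδ
      have hsuccz : Order.succ #z < δ.card := hδsucc _ hzc
      have hβδ : max (⨆ o : z, (hmem o).choose) (Order.succ #z).ord < δ :=
        max_lt hα₀δ ((Cardinal.ord_lt_ord.2 hsuccz).trans_le hδcard.le)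
      have hβκ : max (⨆ o : z, (hmem o).choose) (Order.succ #z).ord < κ.ord := hβδ.trans hδκ
      refine ⟨ch A κ x (Order.succ (max (⨆ o : z, (hmem o).choose) (Order.succ #z).ord)),
        (hsucc _ hβκ).1, ⟨?_, ?_⟩, ?_, ?_⟩
      · -- z ⊆ w
        intro o ho
        have h1 : (o : Ordinal.{0}) ∈
            ch A κ x (max (⨆ o : z, (hmem o).choose) (Order.succ #z).ord) :=
          ch_mono A κ x _ _ ((Ordinal.le_iSup (fun o : z => (hmem o).choose) ⟨o, ho⟩).trans
            (le_max_left _ _)) (hfm ⟨o, ho⟩)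
        exact (hsucc _ hβκ).2.1 (Set.mem_union_left _ h1)
      · -- #z < kap κ w
        have h2 : Order.succ #z ≤
            #(ost (max (⨆ o : z, (hmem o).choose) (Order.succ #z).ord)) := by
          have hsub : {γ : Ordinal.{0} | Ordinal.lift.{1} γ < (Order.succ #z).ord} ⊆
              ost (max (⨆ o : z, (hmem o).choose) (Order.succ #z).ord) :=
            fun γ hγ => mem_ost (le_of_lt (lt_of_lt_of_le hγ (le_max_right _ _)))
          calc Order.succ #z = ((Order.succ #z).ord).card := (Cardinal.card_ord _).symm
            _ = #{γ : Ordinal.{0} | Ordinal.lift.{1} γ < (Order.succ #z).ord} :=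
                (mk_setOf_lift_lt ((((Cardinal.ord_lt_ord.2 hsuccz).trans_le
                  hδcard.le).trans hδκ).trans_le hUc)).symm
            _ ≤ _ := Cardinal.mk_le_mk_of_subset hsub
        have h3 : #(ost (max (⨆ o : z, (hmem o).choose) (Order.succ #z).ord)) ≤
            kap κ (ch A κ x (Order.succ (max (⨆ o : z, (hmem o).choose)
              (Order.succ #z).ord))) := by
          refine Cardinal.mk_le_mk_of_subset ?_
          intro γ hγ
          exact ⟨(hsucc _ hβκ).2.1 (Set.mem_union_right _ hγ),
            lt_of_le_of_lt hγ hβκ⟩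
        exact (Order.lt_succ #z).trans_le (h2.trans h3)
      · -- w ⊆ y
        exact ch_mono A κ x δ _ (hδlim.succ_lt hβδ).le
      · -- #w < kap κ y
        rw [hkap]
        refine Cardinal.ord_lt_ord.1 ?_
        rw [hδcard]
        exact (Fb_card A κ x _).trans (hδF _ (hδlim.succ_lt hβδ))
    · -- x ⊆ y
      have h := ch_mono A κ x δ 0 (zero_le (a := δ))
      rw [ch_zero] at h
      exact h
    · -- #x < kap κ y
      rw [hkap]
      exact Cardinal.ord_lt_ord.1 (by rw [hδcard]; exact hδx)
  · -- weak-club closure property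
    intro x hx hcb
    refine ⟨hx, ?_⟩
    intro y hyx
    obtain ⟨z, ⟨_, hzcb⟩, hyz, hzx⟩ := hcb y hyx
    obtain ⟨w, hwA, hyw, hwz⟩ := hzcb y hyz
    refine ⟨w, hwA, hyw, hwz.1.trans hzx.1, ?_⟩
    exact (hwz.2.trans_le (Cardinal.mk_le_mk_of_subset (fun o ho => ho.1))).trans hzx.2

end TwoCard
end

section
/- For every x ∈ P_κ X, the set P_{κ_x} x is not (κ_x + 1)-strongly stationary (in itself). That is, there is no x for which P_{κ_x} x is (κ_x+1)-strongly stationary. -/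
namespace TwoCard


open Cardinal Set

open Classical in
/-- `A` is `ξ`-strongly stationary in `P_{κ_x} x` (Definition 3.3(1) of the paper):
for `ξ = 0` this means `≺`-cofinal in `P_{κ_x} x`; for `ξ > 0` it means `κ_x` is a
limit cardinal and every `ζ`-strongly stationary `S ⊆ P_{κ_x} x` (`ζ < ξ`) is
`ζ`-strongly stationary in `P_{κ_y} y` for some `y ∈ A` with `y ≺ x`. -/
noncomputable def SStat (κ : Cardinal.{1}) : Ordinal.{1} → Set (Set Ordinal.{0}) → Set Ordinal.{0} → Prop :=
  fun ξ A x =>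
    if ξ = 0 then CofinalBelow κ A x
    else Order.IsSuccLimit (kap κ x) ∧ ∀ ζ < ξ, ∀ S : Set (Set Ordinal.{0}),
      (∀ z ∈ S, prec κ z x) → SStat κ ζ S x →
      ∃ y ∈ A, prec κ y x ∧ SStat κ ζ S y
termination_by ξ => ξ


lemma sstat_pos_iff (κ : Cardinal.{1}) {ξ : Ordinal.{1}} (hξ : ξ ≠ 0)
    (A : Set (Set Ordinal.{0})) (x : Set Ordinal.{0}) :
    SStat κ ξ A x ↔ (Order.IsSuccLimit (kap κ x) ∧ ∀ ζ < ξ, ∀ S : Set (Set Ordinal.{0}),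
      (∀ z ∈ S, prec κ z x) → SStat κ ζ S x →
      ∃ y ∈ A, prec κ y x ∧ SStat κ ζ S y) := by
  rw [SStat]
  simp [hξ]

/-- Weakening the ordinal: if `0 < ξ' ≤ ξ` then `ξ`-strong stationarity implies
`ξ'`-strong stationarity. -/
lemma sstat_mono_ord (κ : Cardinal.{1}) {ξ ξ' : Ordinal.{1}} (h0 : ξ' ≠ 0) (hle : ξ' ≤ ξ)
    {A : Set (Set Ordinal.{0})} {x : Set Ordinal.{0}} (h : SStat κ ξ A x) :
    SStat κ ξ' A x := by
  have hξ : ξ ≠ 0 := by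
    intro h'; subst h'
    exact h0 (le_antisymm (le_of_le_of_eq hle rfl) (zero_le (a := ξ')))
  rw [sstat_pos_iff κ hξ] at h
  rw [sstat_pos_iff κ h0]
  exact ⟨h.1, fun ζ hζ => h.2 ζ (lt_of_lt_of_le hζ hle)⟩

/-- Restriction: strong stationarity of `A` in `P_{κ_y} y` only depends on the part of
`A` below `y`. -/
lemma sstat_restrict (κ : Cardinal.{1}) {ξ : Ordinal.{1}}
    {A : Set (Set Ordinal.{0})} {y : Set Ordinal.{0}} (h : SStat κ ξ A y) :
    SStat κ ξ (A ∩ {z | prec κ z y}) y := by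
  rcases eq_or_ne ξ 0 with rfl | hξ
  · rw [SStat] at h ⊢
    simp only [if_pos rfl] at h ⊢
    intro w hw
    obtain ⟨z, hzA, hwz, hzy⟩ := h w hw
    exact ⟨z, ⟨hzA, hzy⟩, hwz, hzy⟩
  · rw [sstat_pos_iff κ hξ] at h ⊢
    refine ⟨h.1, fun ζ hζ S hS hSy => ?_⟩
    obtain ⟨u, huA, huy, hSu⟩ := h.2 ζ hζ S hS hSy
    exact ⟨u, ⟨huA, huy⟩, huy, hSu⟩

lemma kap_le_mk (κ : Cardinal.{1}) (x : Set Ordinal.{0}) : kap κ x ≤ #x :=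
  Cardinal.mk_le_mk_of_subset (fun o ho => ho.1)

lemma prec_trans_of_prec {κ : Cardinal.{1}} {z y x : Set Ordinal.{0}}
    (hzy : prec κ z y) (hyx : prec κ y x) : prec κ z x :=
  ⟨hzy.1.trans hyx.1, lt_of_lt_of_le (lt_of_lt_of_le hzy.2 (kap_le_mk κ y)) hyx.2.le⟩

/-- For every `x ∈ P_κ X`, the set `P_{κ_x} x` is not
`(κ_x + 1)`-strongly stationary in itself. -/
theorem not_kapSucc_stronglyStationary (κ : Cardinal.{1}) (X : Set Ordinal.{0})
    (hreg : κ.IsRegular) (hunc : ℵ₀ < κ) (hX : KappaSub κ X) :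
    ∀ x ∈ P κ X, ¬ SStat κ ((kap κ x).ord + 1) {z | prec κ z x} x := by
  have key : ∀ o : Ordinal.{1}, ∀ x ∈ P κ X, (kap κ x).ord = o →
      ¬ SStat κ ((kap κ x).ord + 1) {z | prec κ z x} x := by
    intro o
    induction o using Ordinal.induction with
    | h o IH =>
      rintro x hx rfl hS
      have hne : (kap κ x).ord + 1 ≠ 0 := by
        intro h
        exact (Ordinal.succ_ne_zero ((kap κ x).ord)) (by simpa using h)
      rw [sstat_pos_iff κ hne] at hS
      obtain ⟨hlim, hfa⟩ := hS
      have hk0 : kap κ x ≠ 0 := by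
        intro h
        exact hlim.ne_bot (by simpa using h)
      have ho0 : (kap κ x).ord ≠ 0 := by
        simpa [Cardinal.ord_eq_zero] using hk0
      -- `{z | prec κ z x}` is `(kap κ x).ord`-strongly stationary in `x`
      have h1 : SStat κ ((kap κ x).ord) {z | prec κ z x} x := by
        apply sstat_mono_ord κ ho0 (le_self_add)
        rw [sstat_pos_iff κ hne]
        exact ⟨hlim, hfa⟩
      obtain ⟨y, hyA, hyx, hSy⟩ :=
        hfa ((kap κ x).ord) (by rw [Ordinal.add_one_eq_succ]; exact Order.lt_succ _) {z | prec κ z x} (fun z hz => hz) h1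
      -- `kap κ y < kap κ x`
      have hky : kap κ y < kap κ x := lt_of_le_of_lt (kap_le_mk κ y) hyx.2
      have hkyo : (kap κ y).ord < (kap κ x).ord := Cardinal.ord_lt_ord.2 hky
      have h2 : SStat κ ((kap κ y).ord + 1) {z | prec κ z x} y := by
        apply sstat_mono_ord κ (fun h => (Ordinal.succ_ne_zero ((kap κ y).ord)) (by simpa using h))
          (by rw [Ordinal.add_one_eq_succ]; exact Order.succ_le_of_lt hkyo) hSy
      have h3 := sstat_restrict κ h2
      have hset : {z | prec κ z x} ∩ {z | prec κ z y} = {z | prec κ z y} := by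
        ext z
        simp only [Set.mem_inter_iff, Set.mem_setOf_eq, and_iff_right_iff_imp]
        exact fun hzy => prec_trans_of_prec hzy hyx
      rw [hset] at h3
      have hyP : y ∈ P κ X := by
        refine ⟨hyx.1.trans hx.1, ?_⟩
        exact lt_trans (lt_of_lt_of_le hyx.2 (kap_le_mk κ x)) hx.2
      exact IH ((kap κ y).ord) hkyo y hyP rfl h3
  intro x hx
  exact key ((kap κ x).ord) x hx rfl


end TwoCard
end
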